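/- Let m ≥ 1 and let A₁, …, A_m be elements of 𝔄. Then for every positive integer n, ‖exp(∑_{j=1}^m A_j) − fₙ({A_j})‖ ≤ ((3^{m−1} + 1)/(6n²)) · (∑_{j=1}^m ‖A_j‖)³ · exp(∑_{j=1}^m ‖A_j‖). -/

import Mathlib

open Filter NormedSpace

/-- `fString 𝕜 A m n` is the symmetrized product string
`exp(A_m/(2n)) ⋯ exp(A₂/(2n)) · exp(A₁/n) · exp(A₂/(2n)) ⋯ exp(A_m/(2n))`,
where the elements are `A 1, …, A m`. -/
noncomputable def fString (𝕜 : Type*) [RCLike 𝕜] {𝔄 : Type*} [NormedRing 𝔄]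
    [NormedAlgebra 𝕜 𝔄] (A : ℕ → 𝔄) (m n : ℕ) : 𝔄 :=
  ((List.range' 2 (m - 1)).foldl
    (fun acc j => exp ((2 * n : 𝕜)⁻¹ • A j) * acc * exp ((2 * n : 𝕜)⁻¹ • A j))
    (exp ((n : 𝕜)⁻¹ • A 1)))

/-!
Put `a = ∑ ‖A j‖`, `S = fString 𝕜 A m n` and `E = exp ((∑ A j) / n)`, so that
`exp (∑ A j) = E ^ n`. Expanded as power series, `e^x e^y e^x` and `e^(x+y+x)` agree up to
second order, and both have coefficients dominated by those of `e^u`, `u = ‖x‖ + ‖y‖ + ‖x‖`;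
so they differ by at most `u³/3 · e^u`. Peeling off the outermost pair of factors of `S`,
induction on `m` gives `‖S - E‖ ≤ (m - 1) (a/n)³/3 · e^(a/n)`. Multiplication by `E` on the left
or by `S` on the right stretches norms by at most `e^(a/n)`, so telescoping
`E ^ n - S ^ n = ∑ E^(n-1-k) (E - S) S^k` yields `(m - 1)/(3n²) · a³ e^a`, which is within the
stated bound because `2 (m - 1) ≤ 3^(m-1) + 1`.
-/

open Finset
open scoped Nat

lemma add_pow_div_factorial (s t : ℝ) (k : ℕ) :
    (s + t) ^ k / k ! = ∑ p ∈ antidiagonal k, s ^ p.1 / p.1 ! * (t ^ p.2 / p.2 !) := by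
  rw [(Commute.all s t).add_pow', sum_div]
  refine sum_congr rfl fun ⟨i, j⟩ hp => ?_
  obtain rfl : i + j = k := by simpa using hp
  rw [nsmul_eq_mul, Nat.cast_add_choose]
  field_simp

lemma hasSum_pow_div_factorial (u : ℝ) : HasSum (fun k => u ^ k / k !) (Real.exp u) := by
  rw [Real.exp_eq_exp_ℝ]
  exact expSeries_div_hasSum_exp u

section Majorants

variable {𝔄 : Type*} [NormedRing 𝔄]

/-- The constant term is required to be exactly `1`, not of norm at most `1`: in a normed ring
`‖1‖` may exceed `1`. -/
structure ExpMajorized (u : ℝ) (f : ℕ → 𝔄) : Prop where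
  zero : f 0 = 1
  norm_le : ∀ k ≠ 0, ‖f k‖ ≤ u ^ k / k !

def cauchyProduct (f g : ℕ → 𝔄) (k : ℕ) : 𝔄 :=
  ∑ p ∈ antidiagonal k, f p.1 * g p.2

lemma cauchyProduct_zero (f g : ℕ → 𝔄) : cauchyProduct f g 0 = f 0 * g 0 := by
  simp [cauchyProduct]

lemma cauchyProduct_one (f g : ℕ → 𝔄) : cauchyProduct f g 1 = f 0 * g 1 + f 1 * g 0 := by
  simp [cauchyProduct, Nat.sum_antidiagonal_succ]

lemma cauchyProduct_two (f g : ℕ → 𝔄) :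
    cauchyProduct f g 2 = f 0 * g 2 + f 1 * g 1 + f 2 * g 0 := by
  simp [cauchyProduct, Nat.sum_antidiagonal_succ, add_assoc]

namespace ExpMajorized

variable {s t u : ℝ} {f g : ℕ → 𝔄}

lemma nonneg (hf : ExpMajorized u f) : 0 ≤ u := by
  simpa using (norm_nonneg _).trans (hf.norm_le 1 one_ne_zero)

lemma norm_apply_mul_le (hf : ExpMajorized u f) (k : ℕ) (w : 𝔄) :
    ‖f k * w‖ ≤ u ^ k / k ! * ‖w‖ := by
  rcases eq_or_ne k 0 with rfl | hk
  · simp [hf.zero]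
  · exact (norm_mul_le _ _).trans (by gcongr; exact hf.norm_le k hk)

lemma norm_mul_apply_le (hf : ExpMajorized u f) (k : ℕ) (w : 𝔄) :
    ‖w * f k‖ ≤ ‖w‖ * (u ^ k / k !) := by
  rcases eq_or_ne k 0 with rfl | hk
  · simp [hf.zero]
  · exact (norm_mul_le _ _).trans (by gcongr; exact hf.norm_le k hk)

lemma summable_norm (hf : ExpMajorized u f) : Summable fun k => ‖f k‖ :=
  ((Real.summable_pow_div_factorial u).mul_right ‖(1 : 𝔄)‖).of_nonneg_of_le
    (fun _ => norm_nonneg _) fun k => by simpa using hf.norm_apply_mul_le k 1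

lemma cauchyProduct (hf : ExpMajorized s f) (hg : ExpMajorized t g) :
    ExpMajorized (s + t) (cauchyProduct f g) where
  zero := by simp [cauchyProduct_zero, hf.zero, hg.zero]
  norm_le k hk := by
    rw [add_pow_div_factorial]
    refine (norm_sum_le _ _).trans (sum_le_sum fun p hp => ?_)
    rcases eq_or_ne p.2 0 with h2 | h2
    · have h1 : p.1 ≠ 0 := by
        rw [Finset.HasAntidiagonal.mem_antidiagonal] at hp
        omega
      simpa [h2, hg.zero] using hf.norm_le _ h1
    · have hs := hf.nonneg
      exact (hf.norm_apply_mul_le _ _).trans (by gcongr; exact hg.norm_le _ h2)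

variable [CompleteSpace 𝔄]

lemma tsum_mul_tsum (hf : ExpMajorized s f) (hg : ExpMajorized t g) :
    (∑' k, f k) * ∑' k, g k = ∑' k, _root_.cauchyProduct f g k :=
  tsum_mul_tsum_eq_tsum_sum_antidiagonal_of_summable_norm hf.summable_norm hg.summable_norm

lemma norm_tsum_mul_le (hf : ExpMajorized u f) (w : 𝔄) :
    ‖(∑' k, f k) * w‖ ≤ Real.exp u * ‖w‖ := by
  rw [← hf.summable_norm.of_norm.tsum_mul_right]
  exact tsum_of_norm_bounded ((hasSum_pow_div_factorial u).mul_right _)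
    (hf.norm_apply_mul_le · w)

lemma norm_mul_tsum_le (hf : ExpMajorized u f) (w : 𝔄) :
    ‖w * ∑' k, f k‖ ≤ ‖w‖ * Real.exp u := by
  rw [← hf.summable_norm.of_norm.tsum_mul_left]
  exact tsum_of_norm_bounded ((hasSum_pow_div_factorial u).mul_left _)
    (hf.norm_mul_apply_le · w)

lemma norm_tsum_sub_tsum_le (hf : ExpMajorized u f) (hg : ExpMajorized u g)
    (h : ∀ k ≤ 2, f k = g k) :
    ‖∑' k, f k - ∑' k, g k‖ ≤ u ^ 3 / 3 * Real.exp u := by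
  have hfg : Summable fun k => f k - g k :=
    hf.summable_norm.of_norm.sub hg.summable_norm.of_norm
  have htail (k : ℕ) : ‖f (k + 3) - g (k + 3)‖ ≤ u ^ 3 / 3 * (u ^ k / k !) := by
    have hu := hf.nonneg
    have hfact : (6 : ℝ) * k ! ≤ (k + 3)! := by
      norm_cast
      calc 6 * k ! = 3 * (2 * (1 * k !)) := by ring
        _ ≤ (k + 2 + 1) * ((k + 1 + 1) * ((k + 1) * k !)) := by gcongr <;> omega
        _ = (k + 3)! := by simp only [Nat.factorial_succ]
    calc ‖f (k + 3) - g (k + 3)‖ ≤ u ^ (k + 3) / (k + 3)! + u ^ (k + 3) / (k + 3)! :=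
          (norm_sub_le _ _).trans
            (add_le_add (hf.norm_le _ (by omega)) (hg.norm_le _ (by omega)))
      _ ≤ 2 * u ^ (k + 3) / (6 * k !) := by rw [← two_mul, mul_div_assoc]; gcongr
      _ = u ^ 3 / 3 * (u ^ k / k !) := by field_simp; ring
  rw [← hf.summable_norm.of_norm.tsum_sub hg.summable_norm.of_norm,
    ← hfg.sum_add_tsum_nat_add 3, sum_eq_zero fun k hk => by simp [h k (by simp at hk; omega)],
    zero_add]
  exact tsum_of_norm_bounded ((hasSum_pow_div_factorial u).mul_left _) htail

end ExpMajorized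

end Majorants

section Exp

variable {𝔄 : Type*} [NormedRing 𝔄] [NormedAlgebra ℚ 𝔄]

def expCoeff (x : 𝔄) (k : ℕ) : 𝔄 := (k ! : ℚ)⁻¹ • x ^ k

lemma expMajorized_expCoeff {x : 𝔄} {u : ℝ} (hx : ‖x‖ ≤ u) :
    ExpMajorized u (expCoeff x) where
  zero := by simp [expCoeff]
  norm_le k hk := by
    rw [expCoeff, norm_smul, norm_inv, ← Rat.norm_cast_real, Rat.cast_natCast, Real.norm_natCast,
      inv_mul_eq_div]
    gcongr
    exact (norm_pow_le' x (Nat.pos_of_ne_zero hk)).trans (by gcongr)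

lemma cauchyProduct_expCoeff_eq_expCoeff (x y : 𝔄) {k : ℕ} (hk : k ≤ 2) :
    cauchyProduct (cauchyProduct (expCoeff x) (expCoeff y)) (expCoeff x) k =
      expCoeff (x + y + x) k := by
  interval_cases k <;>
    simp [cauchyProduct_zero, cauchyProduct_one, cauchyProduct_two, expCoeff, Nat.factorial]
  · abel
  · simp only [sq, add_mul, mul_add, smul_add]
    module

variable [CompleteSpace 𝔄]

lemma tsum_expCoeff (x : 𝔄) : ∑' k, expCoeff x k = exp x :=
  (exp_series_hasSum_exp' (𝕂 := ℚ) x).tsum_eq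

lemma norm_exp_mul_le (x w : 𝔄) : ‖exp x * w‖ ≤ Real.exp ‖x‖ * ‖w‖ := by
  simpa only [tsum_expCoeff] using (expMajorized_expCoeff le_rfl).norm_tsum_mul_le w

lemma norm_mul_exp_le (x w : 𝔄) : ‖w * exp x‖ ≤ ‖w‖ * Real.exp ‖x‖ := by
  simpa only [tsum_expCoeff] using (expMajorized_expCoeff le_rfl).norm_mul_tsum_le w

theorem norm_exp_mul_exp_mul_exp_sub_exp_le (x y : 𝔄) :
    ‖exp x * exp y * exp x - exp (x + y + x)‖ ≤
      (‖x‖ + ‖y‖ + ‖x‖) ^ 3 / 3 * Real.exp (‖x‖ + ‖y‖ + ‖x‖) := by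
  have hx := expMajorized_expCoeff (le_refl ‖x‖)
  have hy := expMajorized_expCoeff (le_refl ‖y‖)
  have hxyx := expMajorized_expCoeff (norm_add₃_le (a := x) (b := y) (c := x))
  rw [← tsum_expCoeff x, ← tsum_expCoeff y, ← tsum_expCoeff (x + y + x), hx.tsum_mul_tsum hy,
    (hx.cauchyProduct hy).tsum_mul_tsum hx]
  exact ((hx.cauchyProduct hy).cauchyProduct hx).norm_tsum_sub_tsum_le hxyx
    fun k hk => cauchyProduct_expCoeff_eq_expCoeff x y hk

lemma norm_exp_mul_mul_exp_sub_exp_le {x y S : 𝔄} {k t : ℝ} (hk : 0 ≤ k) (hy : ‖y‖ ≤ t)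
    (hS : ‖S - exp y‖ ≤ k * t ^ 3 / 3 * Real.exp t) :
    ‖exp x * S * exp x - exp (x + y + x)‖ ≤
      (k + 1) * (t + 2 * ‖x‖) ^ 3 / 3 * Real.exp (t + 2 * ‖x‖) := by
  have ht : 0 ≤ t := (norm_nonneg y).trans hy
  have hconj : ‖exp x * (S - exp y) * exp x‖ ≤
      k * (t + 2 * ‖x‖) ^ 3 / 3 * Real.exp (t + 2 * ‖x‖) :=
    calc ‖exp x * (S - exp y) * exp x‖ ≤ Real.exp ‖x‖ * ‖S - exp y‖ * Real.exp ‖x‖ :=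
          (norm_mul_exp_le _ _).trans (by gcongr; exact norm_exp_mul_le _ _)
      _ ≤ Real.exp ‖x‖ * (k * t ^ 3 / 3 * Real.exp t) * Real.exp ‖x‖ := by gcongr
      _ = k * t ^ 3 / 3 * Real.exp (t + 2 * ‖x‖) := by
          rw [two_mul, Real.exp_add, Real.exp_add]; ring
      _ ≤ k * (t + 2 * ‖x‖) ^ 3 / 3 * Real.exp (t + 2 * ‖x‖) := by
          gcongr; linarith [norm_nonneg x]
  have hstrang : ‖exp x * exp y * exp x - exp (x + y + x)‖ ≤
      (t + 2 * ‖x‖) ^ 3 / 3 * Real.exp (t + 2 * ‖x‖) :=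
    (norm_exp_mul_exp_mul_exp_sub_exp_le x y).trans (by
      have hu : ‖x‖ + ‖y‖ + ‖x‖ ≤ t + 2 * ‖x‖ := by linarith
      gcongr)
  calc ‖exp x * S * exp x - exp (x + y + x)‖
      = ‖exp x * (S - exp y) * exp x + (exp x * exp y * exp x - exp (x + y + x))‖ := by
        congr 1; noncomm_ring
    _ ≤ _ := (norm_add_le _ _).trans (add_le_add hconj hstrang)
    _ = _ := by ring

lemma norm_mul_exp_mul_mul_exp_le {x S : 𝔄} {t : ℝ} (hS : ∀ w, ‖w * S‖ ≤ ‖w‖ * Real.exp t)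
    (w : 𝔄) : ‖w * (exp x * S * exp x)‖ ≤ ‖w‖ * Real.exp (t + 2 * ‖x‖) :=
  calc ‖w * (exp x * S * exp x)‖ = ‖(w * exp x * S) * exp x‖ := by noncomm_ring
    _ ≤ ‖w‖ * Real.exp ‖x‖ * Real.exp t * Real.exp ‖x‖ := by
        refine (norm_mul_exp_le _ _).trans ?_
        gcongr
        exact (hS _).trans (by gcongr; exact norm_mul_exp_le _ _)
    _ = ‖w‖ * Real.exp (t + 2 * ‖x‖) := by rw [two_mul, Real.exp_add, Real.exp_add]; ring

end Exp

section Telescoping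

variable {R : Type*} [SeminormedRing R] {E S : R} {α : ℝ}

lemma norm_mul_pow_le (hα : 0 ≤ α) (hS : ∀ w, ‖w * S‖ ≤ ‖w‖ * α) (w : R) (k : ℕ) :
    ‖w * S ^ k‖ ≤ ‖w‖ * α ^ k := by
  induction k with
  | zero => simp
  | succ k ih =>
    rw [pow_succ, ← mul_assoc, pow_succ, ← mul_assoc]
    exact (hS _).trans (by gcongr)

lemma norm_pow_sub_pow_le (hα : 0 ≤ α) (hE : ∀ w, ‖E * w‖ ≤ α * ‖w‖)
    (hS : ∀ w, ‖w * S‖ ≤ ‖w‖ * α) (k : ℕ) :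
    ‖E ^ k - S ^ k‖ ≤ k * α ^ (k - 1) * ‖E - S‖ := by
  induction k with
  | zero => simp
  | succ k ih =>
    have hα' : α * (k * α ^ (k - 1)) = k * α ^ k := by
      rcases k with _ | k
      · simp
      · rw [Nat.add_sub_cancel, pow_succ]; ring
    calc ‖E ^ (k + 1) - S ^ (k + 1)‖ = ‖E * (E ^ k - S ^ k) + (E - S) * S ^ k‖ := by
          rw [pow_succ', pow_succ']; noncomm_ring
      _ ≤ α * (k * α ^ (k - 1) * ‖E - S‖) + ‖E - S‖ * α ^ k :=
          (norm_add_le _ _).trans (add_le_add ((hE _).trans (by gcongr))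
            (norm_mul_pow_le hα hS _ k))
      _ = (k + 1 : ℕ) * α ^ (k + 1 - 1) * ‖E - S‖ := by
          rw [Nat.add_sub_cancel]; push_cast; linear_combination ‖E - S‖ * hα'

end Telescoping

section fString

variable (𝕜 : Type*) {𝔄 : Type*} [RCLike 𝕜] [NormedRing 𝔄] [NormedAlgebra 𝕜 𝔄] (A : ℕ → 𝔄)
  (n : ℕ)

lemma fString_one : fString 𝕜 A 1 n = exp ((n : 𝕜)⁻¹ • A 1) := rfl

lemma fString_succ {m : ℕ} (hm : 1 ≤ m) :
    fString 𝕜 A (m + 1) n =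
      exp ((2 * n : 𝕜)⁻¹ • A (m + 1)) * fString 𝕜 A m n *
        exp ((2 * n : 𝕜)⁻¹ • A (m + 1)) := by
  obtain ⟨m, rfl⟩ := Nat.exists_eq_add_of_le' hm
  simp [fString, List.range'_concat, add_comm 2]

lemma inv_natCast_smul_sum_Icc_succ (m : ℕ) :
    (n : 𝕜)⁻¹ • ∑ j ∈ Icc 1 (m + 1), A j =
      (2 * n : 𝕜)⁻¹ • A (m + 1) + (n : 𝕜)⁻¹ • ∑ j ∈ Icc 1 m, A j +
        (2 * n : 𝕜)⁻¹ • A (m + 1) := by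
  have h2n : (n : 𝕜)⁻¹ = (2 * n : 𝕜)⁻¹ + (2 * n : 𝕜)⁻¹ := by
    rw [← two_mul, mul_inv, ← mul_assoc, mul_inv_cancel₀ two_ne_zero, one_mul]
  rw [sum_Icc_succ_top (by omega), h2n]
  simp only [add_smul, smul_add]
  abel

lemma sum_Icc_succ_norm_div_eq (m : ℕ) :
    (∑ j ∈ Icc 1 (m + 1), ‖A j‖) / n =
      (∑ j ∈ Icc 1 m, ‖A j‖) / n + 2 * ‖(2 * n : 𝕜)⁻¹ • A (m + 1)‖ := by
  rw [sum_Icc_succ_top (by omega), norm_smul, norm_inv, norm_mul, RCLike.norm_natCast,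
    RCLike.norm_ofNat]
  field_simp

lemma norm_inv_natCast_smul_sum_le (m : ℕ) :
    ‖(n : 𝕜)⁻¹ • ∑ j ∈ Icc 1 m, A j‖ ≤ (∑ j ∈ Icc 1 m, ‖A j‖) / n := by
  rw [norm_smul, norm_inv, RCLike.norm_natCast, inv_mul_eq_div]
  gcongr
  exact norm_sum_le _ _

variable [NormedAlgebra ℚ 𝔄] [CompleteSpace 𝔄]

lemma norm_mul_fString_le {m : ℕ} (hm : 1 ≤ m) (w : 𝔄) :
    ‖w * fString 𝕜 A m n‖ ≤ ‖w‖ * Real.exp ((∑ j ∈ Icc 1 m, ‖A j‖) / n) := by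
  induction m, hm using Nat.le_induction generalizing w with
  | base =>
    refine (norm_mul_exp_le _ w).trans ?_
    gcongr
    simpa using norm_inv_natCast_smul_sum_le 𝕜 A n 1
  | succ m hm ih =>
    rw [fString_succ 𝕜 A n hm, sum_Icc_succ_norm_div_eq 𝕜 A n m]
    exact norm_mul_exp_mul_mul_exp_le ih w

lemma norm_fString_sub_exp_le {m : ℕ} (hm : 1 ≤ m) :
    ‖fString 𝕜 A m n - exp ((n : 𝕜)⁻¹ • ∑ j ∈ Icc 1 m, A j)‖ ≤
      (m - 1) * ((∑ j ∈ Icc 1 m, ‖A j‖) / n) ^ 3 / 3 *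
        Real.exp ((∑ j ∈ Icc 1 m, ‖A j‖) / n) := by
  induction m, hm using Nat.le_induction with
  | base => simp [fString_one]
  | succ m hm ih =>
    rw [fString_succ 𝕜 A n hm, inv_natCast_smul_sum_Icc_succ 𝕜 A n m,
      sum_Icc_succ_norm_div_eq 𝕜 A n m]
    convert norm_exp_mul_mul_exp_sub_exp_le (by simpa using hm)
      (norm_inv_natCast_smul_sum_le 𝕜 A n m) ih using 3
    push_cast; ring

end fString

theorem suzuki_fString_estimate_i (𝕜 : Type*) [RCLike 𝕜] {𝔄 : Type*} [NormedRing 𝔄]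
    [NormedAlgebra 𝕜 𝔄] [CompleteSpace 𝔄] (m : ℕ) (hm : 1 ≤ m) (A : ℕ → 𝔄)
    (n : ℕ) (hn : 0 < n) :
    ‖exp (∑ j ∈ Finset.Icc 1 m, A j) - (fString 𝕜 A m n) ^ n‖ ≤
      (((3 : ℝ) ^ (m - 1) + 1) / (6 * (n : ℝ) ^ 2)) * (∑ j ∈ Finset.Icc 1 m, ‖A j‖) ^ 3 *
        Real.exp (∑ j ∈ Finset.Icc 1 m, ‖A j‖) := by
  let _ : NormedAlgebra ℚ 𝔄 := NormedAlgebra.restrictScalars ℚ 𝕜 𝔄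
  set a := ∑ j ∈ Icc 1 m, ‖A j‖
  set E := exp ((n : 𝕜)⁻¹ • ∑ j ∈ Icc 1 m, A j)
  have hpow : exp (∑ j ∈ Icc 1 m, A j) = E ^ n := by
    rw [← exp_nsmul, ← Nat.cast_smul_eq_nsmul 𝕜, smul_smul,
      mul_inv_cancel₀ (by exact_mod_cast hn.ne'), one_smul]
  have hE (w : 𝔄) : ‖E * w‖ ≤ Real.exp (a / n) * ‖w‖ :=
    (norm_exp_mul_le _ w).trans (by gcongr; exact norm_inv_natCast_smul_sum_le 𝕜 A n m)
  have hcoeff : ((m : ℝ) - 1) / 3 ≤ ((3 : ℝ) ^ (m - 1) + 1) / 6 := by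
    have := one_add_mul_le_pow (a := (2 : ℝ)) (by norm_num) (m - 1)
    norm_num [Nat.cast_sub hm] at this
    linarith
  have hexp : Real.exp (a / n) ^ (n - 1) * Real.exp (a / n) = Real.exp a := by
    rw [← pow_succ, Nat.sub_add_cancel hn, ← Real.exp_nat_mul, mul_div_cancel₀ _ (by positivity)]
  rw [hpow]
  calc ‖E ^ n - fString 𝕜 A m n ^ n‖
      ≤ n * Real.exp (a / n) ^ (n - 1) * ‖E - fString 𝕜 A m n‖ :=
        norm_pow_sub_pow_le (Real.exp_pos _).le hE (norm_mul_fString_le 𝕜 A n hm) n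
    _ ≤ n * Real.exp (a / n) ^ (n - 1) * ((m - 1) * (a / n) ^ 3 / 3 * Real.exp (a / n)) := by
        rw [norm_sub_rev]; gcongr; exact norm_fString_sub_exp_le 𝕜 A n hm
    _ = ((m : ℝ) - 1) / 3 / n ^ 2 * a ^ 3 * Real.exp a := by
        rw [← hexp]
        field_simp
    _ ≤ ((3 : ℝ) ^ (m - 1) + 1) / 6 / n ^ 2 * a ^ 3 * Real.exp a := by gcongr
    _ = _ := by rw [div_div]
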